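/- Fix an integer m ≥ 1 and reals s > 0, ν > 0, σ > 0, a nonzero complex number b, and a positive integer L; write n = 2m+1. Let a(d) and ȧ_z(d) be the steering vector and its z-derivative for target distance d, and define CRB_z(d) = (σ²/(4|b|²L))·1/(‖a(d)‖²·‖ȧ_z(d)‖² − |ȧ_z(d)ᴴ a(d)|²). Then lim_{d→∞} CRB_z(d)/d⁸ = (1440σ²/(|b|²L))·ν²/((n²−1)·n⁴·(n²−4)·s⁴). (Proposition 5, equation (25), asymptotic scaling of the z-coordinate CRB with target distance.) -/

import Mathlib

open Finset Filter

noncomputable section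

/-- Distance from antenna `(i,k)` (located at `(i·s, k·s, 0)`) to the boresight
target at `(0,0,d)`. -/
def rUPA (d s : ℝ) (i k : ℤ) : ℝ :=
  Real.sqrt (d ^ 2 + (i : ℝ) ^ 2 * s ^ 2 + (k : ℝ) ^ 2 * s ^ 2)

/-- Near-field steering vector entry `a_{ik} = (1/(2ν r_{ik}))·exp(−𝕛 ν r_{ik})`. -/
def steer (d s ν : ℝ) (i k : ℤ) : ℂ :=
  ((1 / (2 * ν * rUPA d s i k) : ℝ) : ℂ) *
    Complex.exp (-Complex.I * (ν : ℂ) * ((rUPA d s i k : ℝ) : ℂ))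

/-- Entry of the x-derivative `ȧ_x` of the steering vector. -/
def dax (d s ν : ℝ) (i k : ℤ) : ℂ :=
  steer d s ν i k * (((i : ℝ) * s : ℝ) : ℂ) *
    (((1 / rUPA d s i k ^ 2 : ℝ) : ℂ) + Complex.I * ((ν / rUPA d s i k : ℝ) : ℂ))

/-- Entry of the y-derivative `ȧ_y` of the steering vector. -/
def day (d s ν : ℝ) (i k : ℤ) : ℂ :=
  steer d s ν i k * (((k : ℝ) * s : ℝ) : ℂ) *
    (((1 / rUPA d s i k ^ 2 : ℝ) : ℂ) + Complex.I * ((ν / rUPA d s i k : ℝ) : ℂ))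

/-- Entry of the z-derivative `ȧ_z` of the steering vector. -/
def daz (d s ν : ℝ) (i k : ℤ) : ℂ :=
  -steer d s ν i k * ((d : ℝ) : ℂ) *
    (((1 / rUPA d s i k ^ 2 : ℝ) : ℂ) + Complex.I * ((ν / rUPA d s i k : ℝ) : ℂ))

/-! ### Auxiliary definitions for the proof -/

/-- `ρ_{ik} = (i² + k²) s²`, the squared lateral offset of antenna `(i,k)`. -/
def rhoF (s : ℝ) (i k : ℤ) : ℝ := ((i:ℝ)^2 + (k:ℝ)^2) * s^2

/-- `φ(a, d) = √(1 + a/d²)`, so that `r = d·φ(ρ, d)`. -/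
def phiA (a d : ℝ) : ℝ := Real.sqrt (1 + a / d^2)

/-- The rescaled per-pair contribution to the Fisher determinant. -/
def Tm (s ν : ℝ) (i k i' k' : ℤ) (d : ℝ) : ℝ :=
  ((rhoF s i' k' - rhoF s i k)^2 / (32*ν^4)) *
    (1/d^2 * (1/((phiA (rhoF s i k) d)^6 * (phiA (rhoF s i' k') d)^6))
     + ν^2 * (1/((phiA (rhoF s i k) d)^4 * (phiA (rhoF s i' k') d)^4
         * (phiA (rhoF s i k) d + phiA (rhoF s i' k') d)^2)))

section Aux

variable {d s ν : ℝ} {i k : ℤ}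

lemma rUPA_pos (hd : 0 < d) : 0 < rUPA d s i k :=
  Real.sqrt_pos.mpr (by positivity)

lemma rUPA_sq : (rUPA d s i k)^2 = d^2 + rhoF s i k := by
  rw [rUPA, Real.sq_sqrt (by positivity), rhoF]; ring

lemma phiA_pos (hd : 0 < d) {a : ℝ} (ha : 0 ≤ a) : 0 < phiA a d :=
  Real.sqrt_pos.mpr (by positivity)

lemma rhoF_nonneg (hs : 0 < s) : 0 ≤ rhoF s i k := by rw [rhoF]; positivity

lemma rUPA_eq (hd : 0 < d) : rUPA d s i k = d * phiA (rhoF s i k) d := by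
  rw [rUPA, phiA, show d ^ 2 + (i : ℝ) ^ 2 * s ^ 2 + (k : ℝ) ^ 2 * s ^ 2
      = d^2 * (1 + rhoF s i k / d^2) by rw [rhoF]; field_simp; ring,
    Real.sqrt_mul (by positivity), Real.sqrt_sq hd.le]

lemma normSq_steer (hd : 0 < d) (hν : 0 < ν) :
    Complex.normSq (steer d s ν i k) = 1/(4*ν^2*(rUPA d s i k)^2) := by
  have hr := rUPA_pos (s := s) (i := i) (k := k) hd
  rw [steer, Complex.normSq_mul, Complex.normSq_ofReal]
  have h1 : Complex.normSq (Complex.exp (-Complex.I * (ν:ℂ) * ((rUPA d s i k : ℝ):ℂ))) = 1 := by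
    rw [Complex.normSq_eq_norm_sq, Complex.norm_exp]
    simp
  rw [h1, mul_one]
  field_simp
  ring

lemma normSq_daz (hd : 0 < d) (hν : 0 < ν) :
    Complex.normSq (daz d s ν i k) = Complex.normSq (steer d s ν i k) * d^2 *
      ((1/(rUPA d s i k)^2)^2 + (ν/(rUPA d s i k))^2) := by
  rw [daz, Complex.normSq_mul, Complex.normSq_mul, Complex.normSq_neg, Complex.normSq_ofReal,
    show Complex.I * ((ν / rUPA d s i k : ℝ) : ℂ) = ((ν / rUPA d s i k : ℝ) : ℂ) * Complex.I from
      mul_comm _ _,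
    Complex.normSq_add_mul_I]
  rw [show ((1 / rUPA d s i k ^ 2 : ℝ)) = 1/(rUPA d s i k)^2 from rfl]
  ring

lemma conj_aux (z : ℂ) (r ν d : ℝ) :
    (starRingEnd ℂ) (-z * ((d : ℝ) : ℂ) * (((1 / r ^ 2 : ℝ) : ℂ) + Complex.I * ((ν / r : ℝ) : ℂ))) * z
      = ((-(Complex.normSq z * d * (1/r^2)) : ℝ) : ℂ)
        + ((Complex.normSq z * d * (ν/r) : ℝ) : ℂ) * Complex.I := by
  have hz : (starRingEnd ℂ) z * z = ((Complex.normSq z : ℝ) : ℂ) := by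
    rw [mul_comm, Complex.mul_conj]
  simp only [map_mul, map_neg, map_add, Complex.conj_ofReal, Complex.conj_I]
  push_cast
  linear_combination (-(d:ℂ) * (1/((r:ℂ))^2 - Complex.I * ((ν:ℂ)/(r:ℂ)))) * hz

lemma conj_daz_steer :
    (starRingEnd ℂ) (daz d s ν i k) * steer d s ν i k
      = ((-(Complex.normSq (steer d s ν i k) * d * (1/(rUPA d s i k)^2)) : ℝ) : ℂ)
        + ((Complex.normSq (steer d s ν i k) * d * (ν/(rUPA d s i k)) : ℝ) : ℂ) * Complex.I := by
  rw [daz]; exact conj_aux _ _ _ _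

lemma sum_identity {α : Type*} (P : Finset α) (f g : α → ℝ) :
    (∑ p ∈ P, f p) * (∑ p ∈ P, f p * g p ^ 2) - (∑ p ∈ P, f p * g p) ^ 2
      = (1/2) * ∑ p ∈ P, ∑ q ∈ P, f p * f q * (g p - g q) ^ 2 := by
  have key : ∀ p ∈ P, ∑ q ∈ P, f p * f q * (g p - g q) ^ 2
      = f p * g p ^ 2 * (∑ q ∈ P, f q) + f p * (∑ q ∈ P, f q * g q ^ 2)
        - 2 * ((f p * g p) * (∑ q ∈ P, f q * g q)) := by
    intro p _
    have : ∀ q ∈ P, f p * f q * (g p - g q) ^ 2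
        = f p * g p ^ 2 * f q + f p * (f q * g q ^ 2) - 2 * ((f p * g p) * (f q * g q)) :=
      fun q _ => by ring
    rw [Finset.sum_congr rfl this, Finset.sum_sub_distrib, Finset.sum_add_distrib,
      ← Finset.mul_sum, ← Finset.mul_sum, ← Finset.mul_sum, ← Finset.mul_sum]
  rw [Finset.sum_congr rfl key, Finset.sum_sub_distrib, Finset.sum_add_distrib,
    ← Finset.sum_mul, ← Finset.sum_mul, ← Finset.mul_sum, ← Finset.sum_mul]
  ring

lemma Dval_abstract {α : Type*} (P : Finset α) (f u v : α → ℝ) (d : ℝ) :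
    ((∑ p ∈ P, f p) * (d^2 * ∑ p ∈ P, f p * ((u p)^2 + (v p)^2))
      - d^2 * ((∑ p ∈ P, f p * u p)^2 + (∑ p ∈ P, f p * v p)^2)) * d^8
    = ∑ p ∈ P, ∑ q ∈ P, d^10 * (1/2) * (f p * f q * ((u p - u q)^2 + (v p - v q)^2)) := by
  have i1 := sum_identity P f u
  have i2 := sum_identity P f v
  have hsplit : ∑ p ∈ P, f p * ((u p)^2 + (v p)^2)
      = (∑ p ∈ P, f p * u p ^ 2) + ∑ p ∈ P, f p * v p ^ 2 := by
    rw [← Finset.sum_add_distrib]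
    exact Finset.sum_congr rfl fun p _ => by ring
  have hT : ∑ p ∈ P, ∑ q ∈ P, d^10 * (1/2) * (f p * f q * ((u p - u q)^2 + (v p - v q)^2))
      = d^10 * (1/2) * (∑ p ∈ P, ∑ q ∈ P, f p * f q * (u p - u q)^2)
        + d^10 * (1/2) * (∑ p ∈ P, ∑ q ∈ P, f p * f q * (v p - v q)^2) := by
    have h1 : ∀ p ∈ P, ∑ q ∈ P, d^10 * (1/2) * (f p * f q * ((u p - u q)^2 + (v p - v q)^2))
        = d^10 * (1/2) * (∑ q ∈ P, f p * f q * (u p - u q)^2)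
          + d^10 * (1/2) * (∑ q ∈ P, f p * f q * (v p - v q)^2) := by
      intro p _
      rw [Finset.mul_sum, Finset.mul_sum, ← Finset.sum_add_distrib]
      exact Finset.sum_congr rfl fun q _ => by ring
    rw [Finset.sum_congr rfl h1, Finset.sum_add_distrib, ← Finset.mul_sum, ← Finset.mul_sum]
  rw [hT, hsplit]
  linear_combination (d:ℝ)^10 * i1 + (d:ℝ)^10 * i2

lemma Tm_eq (hs : 0 < s) (hν : 0 < ν) (hd : 0 < d) (i k i' k' : ℤ) :
    d^10 * (1/2) * ((1/(4*ν^2*(rUPA d s i k)^2)) * (1/(4*ν^2*(rUPA d s i' k')^2)) *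
      ((1/(rUPA d s i k)^2 - 1/(rUPA d s i' k')^2)^2
        + (ν/(rUPA d s i k) - ν/(rUPA d s i' k'))^2))
    = Tm s ν i k i' k' d := by
  have ha : 0 < phiA (rhoF s i k) d := phiA_pos hd (rhoF_nonneg hs)
  have hb : 0 < phiA (rhoF s i' k') d := phiA_pos hd (rhoF_nonneg hs)
  have hra : rUPA d s i k = d * phiA (rhoF s i k) d := rUPA_eq hd
  have hrb : rUPA d s i' k' = d * phiA (rhoF s i' k') d := rUPA_eq hd
  have hρ1 : rhoF s i k = d^2 * (phiA (rhoF s i k) d)^2 - d^2 := by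
    have h := rUPA_sq (d := d) (s := s) (i := i) (k := k)
    rw [hra] at h; nlinarith [h]
  have hρ2 : rhoF s i' k' = d^2 * (phiA (rhoF s i' k') d)^2 - d^2 := by
    have h := rUPA_sq (d := d) (s := s) (i := i') (k := k')
    rw [hrb] at h; nlinarith [h]
  rw [Tm]
  set a := phiA (rhoF s i k) d with hadef
  set b := phiA (rhoF s i' k') d with hbdef
  rw [hra, hrb, hρ1, hρ2]
  have hab : 0 < a + b := by positivity
  field_simp
  ring

lemma Dval (m : ℕ) (s ν d : ℝ) (hs : 0 < s) (hν : 0 < ν) (hd : 0 < d) :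
    ((∑ i ∈ Icc (-(m : ℤ)) m, ∑ k ∈ Icc (-(m : ℤ)) m, Complex.normSq (steer d s ν i k)) *
        (∑ i ∈ Icc (-(m : ℤ)) m, ∑ k ∈ Icc (-(m : ℤ)) m, Complex.normSq (daz d s ν i k)) -
        Complex.normSq (∑ i ∈ Icc (-(m : ℤ)) m, ∑ k ∈ Icc (-(m : ℤ)) m,
          (starRingEnd ℂ) (daz d s ν i k) * steer d s ν i k)) * d ^ 8
    = ∑ p ∈ (Icc (-(m:ℤ)) m) ×ˢ (Icc (-(m:ℤ)) m), ∑ q ∈ (Icc (-(m:ℤ)) m) ×ˢ (Icc (-(m:ℤ)) m),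
        Tm s ν p.1 p.2 q.1 q.2 d := by
  have e1 : (∑ i ∈ Icc (-(m : ℤ)) m, ∑ k ∈ Icc (-(m : ℤ)) m, Complex.normSq (steer d s ν i k))
      = ∑ p ∈ (Icc (-(m:ℤ)) m) ×ˢ (Icc (-(m:ℤ)) m), Complex.normSq (steer d s ν p.1 p.2) :=
    (Finset.sum_product' _ _ _).symm
  have e2 : (∑ i ∈ Icc (-(m : ℤ)) m, ∑ k ∈ Icc (-(m : ℤ)) m, Complex.normSq (daz d s ν i k))
      = ∑ p ∈ (Icc (-(m:ℤ)) m) ×ˢ (Icc (-(m:ℤ)) m), Complex.normSq (daz d s ν p.1 p.2) :=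
    (Finset.sum_product' _ _ _).symm
  have e3 : (∑ i ∈ Icc (-(m : ℤ)) m, ∑ k ∈ Icc (-(m : ℤ)) m,
        (starRingEnd ℂ) (daz d s ν i k) * steer d s ν i k)
      = ∑ p ∈ (Icc (-(m:ℤ)) m) ×ˢ (Icc (-(m:ℤ)) m),
          (starRingEnd ℂ) (daz d s ν p.1 p.2) * steer d s ν p.1 p.2 :=
    (Finset.sum_product' _ _ _).symm
  rw [e1, e2, e3]
  have hA : (∑ p ∈ (Icc (-(m:ℤ)) m) ×ˢ (Icc (-(m:ℤ)) m), Complex.normSq (steer d s ν p.1 p.2))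
      = ∑ p ∈ (Icc (-(m:ℤ)) m) ×ˢ (Icc (-(m:ℤ)) m), 1/(4*ν^2*(rUPA d s p.1 p.2)^2) :=
    Finset.sum_congr rfl fun p _ => normSq_steer hd hν
  have hB : (∑ p ∈ (Icc (-(m:ℤ)) m) ×ˢ (Icc (-(m:ℤ)) m), Complex.normSq (daz d s ν p.1 p.2))
      = d^2 * ∑ p ∈ (Icc (-(m:ℤ)) m) ×ˢ (Icc (-(m:ℤ)) m),
          1/(4*ν^2*(rUPA d s p.1 p.2)^2) *
            ((1/(rUPA d s p.1 p.2)^2)^2 + (ν/(rUPA d s p.1 p.2))^2) := by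
    rw [Finset.mul_sum]
    exact Finset.sum_congr rfl fun p _ => by
      rw [normSq_daz hd hν, normSq_steer hd hν]; ring
  have hC0 : (∑ p ∈ (Icc (-(m:ℤ)) m) ×ˢ (Icc (-(m:ℤ)) m),
        (starRingEnd ℂ) (daz d s ν p.1 p.2) * steer d s ν p.1 p.2)
      = (((∑ p ∈ (Icc (-(m:ℤ)) m) ×ˢ (Icc (-(m:ℤ)) m),
            -(1/(4*ν^2*(rUPA d s p.1 p.2)^2) * d * (1/(rUPA d s p.1 p.2)^2)) : ℝ)) : ℂ)
        + (((∑ p ∈ (Icc (-(m:ℤ)) m) ×ˢ (Icc (-(m:ℤ)) m),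
            1/(4*ν^2*(rUPA d s p.1 p.2)^2) * d * (ν/(rUPA d s p.1 p.2)) : ℝ)) : ℂ) * Complex.I := by
    rw [Complex.ofReal_sum, Complex.ofReal_sum, Finset.sum_mul, ← Finset.sum_add_distrib]
    exact Finset.sum_congr rfl fun p _ => by
      rw [conj_daz_steer, normSq_steer hd hν]
  have hC : Complex.normSq (∑ p ∈ (Icc (-(m:ℤ)) m) ×ˢ (Icc (-(m:ℤ)) m),
        (starRingEnd ℂ) (daz d s ν p.1 p.2) * steer d s ν p.1 p.2)
      = d^2 * ((∑ p ∈ (Icc (-(m:ℤ)) m) ×ˢ (Icc (-(m:ℤ)) m),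
            1/(4*ν^2*(rUPA d s p.1 p.2)^2) * (1/(rUPA d s p.1 p.2)^2))^2
          + (∑ p ∈ (Icc (-(m:ℤ)) m) ×ˢ (Icc (-(m:ℤ)) m),
            1/(4*ν^2*(rUPA d s p.1 p.2)^2) * (ν/(rUPA d s p.1 p.2)))^2) := by
    rw [hC0, Complex.normSq_add_mul_I]
    have f1 : (∑ p ∈ (Icc (-(m:ℤ)) m) ×ˢ (Icc (-(m:ℤ)) m),
          -(1/(4*ν^2*(rUPA d s p.1 p.2)^2) * d * (1/(rUPA d s p.1 p.2)^2)))
        = (-d) * ∑ p ∈ (Icc (-(m:ℤ)) m) ×ˢ (Icc (-(m:ℤ)) m),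
            1/(4*ν^2*(rUPA d s p.1 p.2)^2) * (1/(rUPA d s p.1 p.2)^2) := by
      rw [Finset.mul_sum]; exact Finset.sum_congr rfl fun p _ => by ring
    have f2 : (∑ p ∈ (Icc (-(m:ℤ)) m) ×ˢ (Icc (-(m:ℤ)) m),
          1/(4*ν^2*(rUPA d s p.1 p.2)^2) * d * (ν/(rUPA d s p.1 p.2)))
        = d * ∑ p ∈ (Icc (-(m:ℤ)) m) ×ˢ (Icc (-(m:ℤ)) m),
            1/(4*ν^2*(rUPA d s p.1 p.2)^2) * (ν/(rUPA d s p.1 p.2)) := by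
      rw [Finset.mul_sum]; exact Finset.sum_congr rfl fun p _ => by ring
    rw [f1, f2]; ring
  rw [hA, hB, hC]
  have habs := Dval_abstract ((Icc (-(m:ℤ)) m) ×ˢ (Icc (-(m:ℤ)) m))
      (fun p => 1/(4*ν^2*(rUPA d s p.1 p.2)^2))
      (fun p => 1/(rUPA d s p.1 p.2)^2)
      (fun p => ν/(rUPA d s p.1 p.2)) d
  rw [habs]
  exact Finset.sum_congr rfl fun p _ => Finset.sum_congr rfl fun q _ =>
    Tm_eq hs hν hd p.1 p.2 q.1 q.2

end Aux

lemma phi_tendsto (a : ℝ) : Tendsto (fun d : ℝ => Real.sqrt (1 + a / d^2)) atTop (nhds 1) := by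
  have hp : Tendsto (fun d : ℝ => d^2) atTop atTop := tendsto_pow_atTop two_ne_zero
  have h : Tendsto (fun d : ℝ => a / d^2) atTop (nhds 0) :=
    Tendsto.div_atTop tendsto_const_nhds hp
  have h2 : Tendsto (fun d : ℝ => 1 + a / d^2) atTop (nhds 1) := by
    simpa using tendsto_const_nhds.add h
  simpa using h2.sqrt

lemma inv_sq_tendsto : Tendsto (fun d : ℝ => 1 / d^2) atTop (nhds 0) :=
  Tendsto.div_atTop tendsto_const_nhds (tendsto_pow_atTop two_ne_zero)

lemma term_tendsto (a c ν C : ℝ) :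
    Tendsto (fun d : ℝ => C * (1/d^2 * (1/((Real.sqrt (1 + a / d^2))^6 * (Real.sqrt (1 + c / d^2))^6))
      + ν^2 * (1/((Real.sqrt (1 + a / d^2))^4 * (Real.sqrt (1 + c / d^2))^4
          * (Real.sqrt (1 + a / d^2) + Real.sqrt (1 + c / d^2))^2))))
      atTop (nhds (C * (ν^2/4))) := by
  have A := phi_tendsto a
  have B := phi_tendsto c
  have d1 : Tendsto (fun d : ℝ => (Real.sqrt (1 + a / d^2))^6 * (Real.sqrt (1 + c / d^2))^6)
      atTop (nhds 1) := by simpa using (A.pow 6).mul (B.pow 6)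
  have f1 : Tendsto (fun d : ℝ => 1/d^2 * (1/((Real.sqrt (1 + a / d^2))^6 * (Real.sqrt (1 + c / d^2))^6)))
      atTop (nhds 0) := by
    have := inv_sq_tendsto.mul (d1.inv₀ one_ne_zero)
    simpa [one_div] using this
  have d2 : Tendsto (fun d : ℝ => (Real.sqrt (1 + a / d^2))^4 * (Real.sqrt (1 + c / d^2))^4
      * (Real.sqrt (1 + a / d^2) + Real.sqrt (1 + c / d^2))^2) atTop (nhds 4) := by
    have := ((A.pow 4).mul (B.pow 4)).mul ((A.add B).pow 2)
    norm_num at this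
    exact this
  have f2 : Tendsto (fun d : ℝ => ν^2 * (1/((Real.sqrt (1 + a / d^2))^4 * (Real.sqrt (1 + c / d^2))^4
      * (Real.sqrt (1 + a / d^2) + Real.sqrt (1 + c / d^2))^2))) atTop (nhds (ν^2/4)) := by
    have := (d2.inv₀ (by norm_num : (4:ℝ) ≠ 0)).const_mul (ν^2)
    simpa [one_div, div_eq_mul_inv] using this
  have := (f1.add f2).const_mul C
  simpa using this

lemma icc_succ (m : ℕ) : Icc (-(m+1:ℤ)) (m+1) = insert (-(m+1:ℤ)) (insert ((m+1:ℤ)) (Icc (-(m:ℤ)) m)) := by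
  ext x; simp only [Finset.mem_Icc, Finset.mem_insert]; omega

lemma sumW2 (m : ℕ) : ∑ i ∈ Icc (-(m:ℤ)) m, ((i:ℝ))^2 = (m*(m+1)*(2*m+1):ℝ)/3 := by
  induction m with
  | zero => simp
  | succ m ih =>
    have h : ((m+1:ℕ):ℤ) = (m:ℤ)+1 := by push_cast; ring
    rw [h, icc_succ, Finset.sum_insert (by simp only [Finset.mem_insert, Finset.mem_Icc]; omega),
      Finset.sum_insert (by simp only [Finset.mem_Icc]; omega), ih]
    push_cast; ring

lemma sumW4 (m : ℕ) : ∑ i ∈ Icc (-(m:ℤ)) m, ((i:ℝ))^4 = (m*(m+1)*(2*m+1)*(3*m^2+3*m-1):ℝ)/15 := by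
  induction m with
  | zero => simp
  | succ m ih =>
    have h : ((m+1:ℕ):ℤ) = (m:ℤ)+1 := by push_cast; ring
    rw [h, icc_succ, Finset.sum_insert (by simp only [Finset.mem_insert, Finset.mem_Icc]; omega),
      Finset.sum_insert (by simp only [Finset.mem_Icc]; omega), ih]
    push_cast; ring

lemma hcard (m : ℕ) : (((Icc (-(m:ℤ)) m).card : ℝ)) = 2*(m:ℝ)+1 := by
  rw [Int.card_Icc]
  have : ((m:ℤ) + 1 - -(m:ℤ)).toNat = 2*m+1 := by omega
  rw [this]; push_cast; ring

lemma hS1 (m : ℕ) (s : ℝ) :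
    ∑ p ∈ (Icc (-(m:ℤ)) m) ×ˢ (Icc (-(m:ℤ)) m), rhoF s p.1 p.2
      = 2*(2*(m:ℝ)+1)*(∑ i ∈ Icc (-(m:ℤ)) m, (i:ℝ)^2)*s^2 := by
  rw [Finset.sum_product]
  have inner : ∀ i ∈ Icc (-(m:ℤ)) m, (∑ k ∈ Icc (-(m:ℤ)) m, rhoF s ((i, k)).1 ((i, k)).2)
      = (2*(m:ℝ)+1)*((i:ℝ)^2*s^2) + (∑ j ∈ Icc (-(m:ℤ)) m, (j:ℝ)^2)*s^2 := by
    intro i _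
    have h1 : ∀ k ∈ Icc (-(m:ℤ)) m, rhoF s ((i, k)).1 ((i, k)).2
        = (i:ℝ)^2*s^2 + (k:ℝ)^2*s^2 := by
      intro k _; simp only [rhoF]; ring
    rw [Finset.sum_congr rfl h1, Finset.sum_add_distrib, Finset.sum_const, nsmul_eq_mul,
      hcard, ← Finset.sum_mul]
  rw [Finset.sum_congr rfl inner, Finset.sum_add_distrib, Finset.sum_const, nsmul_eq_mul, hcard]
  have h2 : ∀ i ∈ Icc (-(m:ℤ)) m, (2*(m:ℝ)+1)*((i:ℝ)^2*s^2)
      = ((2*(m:ℝ)+1)*s^2)*(i:ℝ)^2 := fun i _ => by ring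
  rw [Finset.sum_congr rfl h2, ← Finset.mul_sum]
  ring

lemma hS2 (m : ℕ) (s : ℝ) :
    ∑ p ∈ (Icc (-(m:ℤ)) m) ×ˢ (Icc (-(m:ℤ)) m), (rhoF s p.1 p.2)^2
      = (2*(2*(m:ℝ)+1)*(∑ i ∈ Icc (-(m:ℤ)) m, (i:ℝ)^4)
          + 2*(∑ i ∈ Icc (-(m:ℤ)) m, (i:ℝ)^2)^2)*s^4 := by
  rw [Finset.sum_product]
  have inner : ∀ i ∈ Icc (-(m:ℤ)) m, (∑ k ∈ Icc (-(m:ℤ)) m, (rhoF s ((i, k)).1 ((i, k)).2)^2)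
      = (2*(m:ℝ)+1)*((i:ℝ)^4*s^4) + (2*(i:ℝ)^2*s^4)*(∑ j ∈ Icc (-(m:ℤ)) m, (j:ℝ)^2)
        + s^4*(∑ j ∈ Icc (-(m:ℤ)) m, (j:ℝ)^4) := by
    intro i _
    have h1 : ∀ k ∈ Icc (-(m:ℤ)) m, (rhoF s ((i, k)).1 ((i, k)).2)^2
        = (i:ℝ)^4*s^4 + (2*(i:ℝ)^2*s^4)*(k:ℝ)^2 + s^4*(k:ℝ)^4 := by
      intro k _; simp only [rhoF]; ring
    rw [Finset.sum_congr rfl h1, Finset.sum_add_distrib, Finset.sum_add_distrib,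
      Finset.sum_const, nsmul_eq_mul, hcard, ← Finset.mul_sum, ← Finset.mul_sum]
  rw [Finset.sum_congr rfl inner, Finset.sum_add_distrib, Finset.sum_add_distrib,
    Finset.sum_const, nsmul_eq_mul, hcard]
  have h2 : ∀ i ∈ Icc (-(m:ℤ)) m, (2*(m:ℝ)+1)*((i:ℝ)^4*s^4)
      = ((2*(m:ℝ)+1)*s^4)*(i:ℝ)^4 := fun i _ => by ring
  have h3 : ∀ i ∈ Icc (-(m:ℤ)) m, (2*(i:ℝ)^2*s^4)*(∑ j ∈ Icc (-(m:ℤ)) m, (j:ℝ)^2)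
      = ((2*s^4)*(∑ j ∈ Icc (-(m:ℤ)) m, (j:ℝ)^2))*(i:ℝ)^2 := fun i _ => by ring
  rw [Finset.sum_congr rfl h2, ← Finset.mul_sum, Finset.sum_congr rfl h3, ← Finset.mul_sum]
  ring

lemma Vsum_eq (m : ℕ) (s ν : ℝ) (hν : 0 < ν) :
    (∑ p ∈ (Icc (-(m:ℤ)) m) ×ˢ (Icc (-(m:ℤ)) m), ∑ q ∈ (Icc (-(m:ℤ)) m) ×ˢ (Icc (-(m:ℤ)) m),
       ((rhoF s q.1 q.2 - rhoF s p.1 p.2)^2/(32*ν^4)) * (ν^2/4))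
    = (2*(m:ℝ)+1)^4*((2*(m:ℝ)+1)^2-1)*((2*(m:ℝ)+1)^2-4)*s^4/(5760*ν^2) := by
  have hν' : ν ≠ 0 := ne_of_gt hν
  have hstep : ∀ p ∈ (Icc (-(m:ℤ)) m) ×ˢ (Icc (-(m:ℤ)) m),
      (∑ q ∈ (Icc (-(m:ℤ)) m) ×ˢ (Icc (-(m:ℤ)) m),
        ((rhoF s q.1 q.2 - rhoF s p.1 p.2)^2/(32*ν^4)) * (ν^2/4))
      = (1/(128*ν^2)) * ∑ q ∈ (Icc (-(m:ℤ)) m) ×ˢ (Icc (-(m:ℤ)) m),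
          (rhoF s p.1 p.2 - rhoF s q.1 q.2)^2 := by
    intro p _
    rw [Finset.mul_sum]
    exact Finset.sum_congr rfl fun q _ => by field_simp; ring
  rw [Finset.sum_congr rfl hstep, ← Finset.mul_sum]
  have hid := sum_identity ((Icc (-(m:ℤ)) m) ×ˢ (Icc (-(m:ℤ)) m))
      (fun _ => (1:ℝ)) (fun p => rhoF s p.1 p.2)
  simp only [one_mul, Finset.sum_const, nsmul_eq_mul, mul_one] at hid
  have hDS : (∑ p ∈ (Icc (-(m:ℤ)) m) ×ˢ (Icc (-(m:ℤ)) m),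
        ∑ q ∈ (Icc (-(m:ℤ)) m) ×ˢ (Icc (-(m:ℤ)) m), (rhoF s p.1 p.2 - rhoF s q.1 q.2)^2)
      = 2 * ((((Icc (-(m:ℤ)) m) ×ˢ (Icc (-(m:ℤ)) m)).card : ℝ)
            * (∑ p ∈ (Icc (-(m:ℤ)) m) ×ˢ (Icc (-(m:ℤ)) m), (rhoF s p.1 p.2)^2)
          - (∑ p ∈ (Icc (-(m:ℤ)) m) ×ˢ (Icc (-(m:ℤ)) m), rhoF s p.1 p.2)^2) := by
    linarith [hid]
  rw [hDS]
  have hcardP : ((((Icc (-(m:ℤ)) m) ×ˢ (Icc (-(m:ℤ)) m)).card : ℝ)) = (2*(m:ℝ)+1)^2 := by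
    rw [Finset.card_product]
    push_cast
    rw [hcard]; ring
  rw [hcardP, hS1, hS2, sumW2, sumW4]
  field_simp
  ring

/-- Proposition 5, eq. (25): with `n = 2m+1`,
`CRB_z(d)/d⁸ → (1440σ²/(|b|²L))·ν²/((n²−1)n⁴(n²−4)s⁴)` as `d → ∞`. -/
theorem crb_z_asymptotic (m : ℕ) (hm : 1 ≤ m) (s ν σ : ℝ)
    (hs : 0 < s) (hν : 0 < ν) (hσ : 0 < σ) (b : ℂ) (hb : b ≠ 0) (L : ℕ) (hL : 0 < L) :
    Tendsto (fun d : ℝ =>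
        (σ ^ 2 / (4 * Complex.normSq b * (L : ℝ))) *
          (1 / ((∑ i ∈ Icc (-(m : ℤ)) m, ∑ k ∈ Icc (-(m : ℤ)) m,
                  Complex.normSq (steer d s ν i k)) *
                (∑ i ∈ Icc (-(m : ℤ)) m, ∑ k ∈ Icc (-(m : ℤ)) m,
                  Complex.normSq (daz d s ν i k)) -
                Complex.normSq (∑ i ∈ Icc (-(m : ℤ)) m, ∑ k ∈ Icc (-(m : ℤ)) m,
                  (starRingEnd ℂ) (daz d s ν i k) * steer d s ν i k))) / d ^ 8)
      atTop
      (nhds ((1440 * σ ^ 2 / (Complex.normSq b * (L : ℝ))) *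
        ν ^ 2 / (((2 * (m : ℝ) + 1) ^ 2 - 1) * (2 * (m : ℝ) + 1) ^ 4 *
          ((2 * (m : ℝ) + 1) ^ 2 - 4) * s ^ 4))) := by
  have hb' : (0:ℝ) < Complex.normSq b := Complex.normSq_pos.mpr hb
  have hL' : (0:ℝ) < (L:ℝ) := by exact_mod_cast hL
  have hm' : (1:ℝ) ≤ (m:ℝ) := by exact_mod_cast hm
  have hsum : Tendsto (fun d : ℝ => ∑ p ∈ (Icc (-(m:ℤ)) m) ×ˢ (Icc (-(m:ℤ)) m),
        ∑ q ∈ (Icc (-(m:ℤ)) m) ×ˢ (Icc (-(m:ℤ)) m), Tm s ν p.1 p.2 q.1 q.2 d) atTop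
      (nhds (∑ p ∈ (Icc (-(m:ℤ)) m) ×ˢ (Icc (-(m:ℤ)) m),
        ∑ q ∈ (Icc (-(m:ℤ)) m) ×ˢ (Icc (-(m:ℤ)) m),
          ((rhoF s q.1 q.2 - rhoF s p.1 p.2)^2/(32*ν^4)) * (ν^2/4))) := by
    refine tendsto_finset_sum _ fun p _ => tendsto_finset_sum _ fun q _ => ?_
    unfold Tm phiA
    simpa only [Tm, phiA] using term_tendsto (rhoF s p.1 p.2) (rhoF s q.1 q.2) ν
      ((rhoF s q.1 q.2 - rhoF s p.1 p.2)^2/(32*ν^4))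
  rw [Vsum_eq m s ν hν] at hsum
  have heq : (fun d : ℝ => ∑ p ∈ (Icc (-(m:ℤ)) m) ×ˢ (Icc (-(m:ℤ)) m),
        ∑ q ∈ (Icc (-(m:ℤ)) m) ×ˢ (Icc (-(m:ℤ)) m), Tm s ν p.1 p.2 q.1 q.2 d)
      =ᶠ[atTop] (fun d : ℝ =>
        ((∑ i ∈ Icc (-(m : ℤ)) m, ∑ k ∈ Icc (-(m : ℤ)) m, Complex.normSq (steer d s ν i k)) *
          (∑ i ∈ Icc (-(m : ℤ)) m, ∑ k ∈ Icc (-(m : ℤ)) m, Complex.normSq (daz d s ν i k)) -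
          Complex.normSq (∑ i ∈ Icc (-(m : ℤ)) m, ∑ k ∈ Icc (-(m : ℤ)) m,
            (starRingEnd ℂ) (daz d s ν i k) * steer d s ν i k)) * d ^ 8) := by
    filter_upwards [eventually_gt_atTop (0:ℝ)] with d hd
    exact (Dval m s ν d hs hν hd).symm
  have hg := hsum.congr' heq
  have hVpos : (0:ℝ) < (2*(m:ℝ)+1)^4*((2*(m:ℝ)+1)^2-1)*((2*(m:ℝ)+1)^2-4)*s^4/(5760*ν^2) := by
    have h1 : (0:ℝ) < (2*(m:ℝ)+1)^2-1 := by nlinarith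
    have h2 : (0:ℝ) < (2*(m:ℝ)+1)^2-4 := by nlinarith
    have h3 : (0:ℝ) < (2*(m:ℝ)+1)^4 := by positivity
    have h4 : (0:ℝ) < s^4 := by positivity
    have h5 : (0:ℝ) < 5760*ν^2 := by positivity
    exact div_pos (mul_pos (mul_pos (mul_pos h3 h1) h2) h4) h5
  have hfin := Filter.Tendsto.div
    (tendsto_const_nhds (x := σ ^ 2 / (4 * Complex.normSq b * (L : ℝ))) (f := atTop))
    hg (ne_of_gt hVpos)
  have hEq2 : σ ^ 2 / (4 * Complex.normSq b * (L : ℝ))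
        / ((2*(m:ℝ)+1)^4*((2*(m:ℝ)+1)^2-1)*((2*(m:ℝ)+1)^2-4)*s^4/(5760*ν^2))
      = (1440 * σ ^ 2 / (Complex.normSq b * (L : ℝ))) *
        ν ^ 2 / (((2 * (m : ℝ) + 1) ^ 2 - 1) * (2 * (m : ℝ) + 1) ^ 4 *
          ((2 * (m : ℝ) + 1) ^ 2 - 4) * s ^ 4) := by
    have h1 : ((2*(m:ℝ)+1)^2-1) ≠ 0 := by nlinarith
    have h2 : ((2*(m:ℝ)+1)^2-4) ≠ 0 := by nlinarith
    have h3 : (2*(m:ℝ)+1) ≠ 0 := by nlinarith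
    have hKne : Complex.normSq b ≠ 0 := ne_of_gt hb'
    have hLne : (L:ℝ) ≠ 0 := ne_of_gt hL'
    have hsne : s ≠ 0 := ne_of_gt hs
    have hνne : ν ≠ 0 := ne_of_gt hν
    field_simp
    ring
  rw [hEq2] at hfin
  refine Tendsto.congr (fun d => ?_) hfin
  rw [mul_one_div, div_div]
  rfl
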